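/- Let λ_1, …, λ_{12} be complex numbers of modulus 1, and define η_g(τ) = q·∏_{n≥1}∏_{i=1}^{12}(1−λ_i^{-1}q^n)(1−λ_i q^n) and η_{-g}(τ) = q·∏_{n≥1}∏_{i=1}^{12}(1+λ_i^{-1}q^n)(1+λ_i q^n), and set t_g(τ) = η_g(τ)/η_g(2τ) and t_{-g}(τ) = η_{-g}(τ)/η_{-g}(2τ). Then for all τ in the complex upper half-plane ℍ one has t_g(τ + 1/2) = −t_{-g}(τ). -/

import Mathlib

noncomputable section

open Complex

/-- `2πi`. -/
def twoPiI : ℂ := 2 * Real.pi * Complex.I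

/-- `q = e^{2πiτ}`. -/
def qq (τ : ℂ) : ℂ := Complex.exp (twoPiI * τ)

/-- `y = e^{2πiz}`. -/
def yy (z : ℂ) : ℂ := Complex.exp (twoPiI * z)

/-- Jacobi theta function `ϑ₁`. -/
def th1 (τ z : ℂ) : ℂ :=
  -Complex.I * ∑' n : ℤ, (-1 : ℂ) ^ n *
    Complex.exp (twoPiI * (((n : ℂ) + 1/2) * z + ((n : ℂ) + 1/2) ^ 2 / 2 * τ))

/-- Jacobi theta function `ϑ₂`. -/
def th2 (τ z : ℂ) : ℂ :=
  ∑' n : ℤ, Complex.exp (twoPiI * (((n : ℂ) + 1/2) * z + ((n : ℂ) + 1/2) ^ 2 / 2 * τ))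

/-- Jacobi theta function `ϑ₃`. -/
def th3 (τ z : ℂ) : ℂ :=
  ∑' n : ℤ, Complex.exp (twoPiI * ((n : ℂ) * z + (n : ℂ) ^ 2 / 2 * τ))

/-- Jacobi theta function `ϑ₄`. -/
def th4 (τ z : ℂ) : ℂ :=
  ∑' n : ℤ, (-1 : ℂ) ^ n * Complex.exp (twoPiI * ((n : ℂ) * z + (n : ℂ) ^ 2 / 2 * τ))

/-- The Dedekind eta function `η(τ) = q^{1/24} ∏_{n≥1} (1 - qⁿ)`. -/
def etaF (τ : ℂ) : ℂ :=
  Complex.exp (twoPiI * τ / 24) * ∏' n : ℕ, (1 - qq τ ^ (n + 1))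

/-- The quasimodular Eisenstein series `E₂(τ) = 1 - 24 ∑_{n≥1} σ₁(n) qⁿ`. -/
def E2 (τ : ℂ) : ℂ :=
  1 - 24 * ∑' n : ℕ, (∑ d ∈ Nat.divisors (n + 1), (d : ℂ)) * qq τ ^ (n + 1)

/-- `Λ_N(τ) = (N/24)(N E₂(Nτ) - E₂(τ))`. -/
def Lam (N : ℕ) (τ : ℂ) : ℂ := (N : ℂ) / 24 * ((N : ℂ) * E2 ((N : ℂ) * τ) - E2 τ)

/-- The weak Jacobi form `φ_{0,1}`. -/
def phi01 (τ z : ℂ) : ℂ :=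
  4 * (th2 τ z ^ 2 / th2 τ 0 ^ 2 + th3 τ z ^ 2 / th3 τ 0 ^ 2 + th4 τ z ^ 2 / th4 τ 0 ^ 2)

/-- The weak Jacobi form `φ_{-2,1}`. -/
def phim21 (τ z : ℂ) : ℂ := -(th1 τ z ^ 2) / etaF τ ^ 6

/-- `η_g(τ) = q·∏_{n≥1}∏_{i=1}^{12}(1−λᵢ⁻¹qⁿ)(1−λᵢqⁿ)`. -/
def etaG12 (lam : Fin 12 → ℂ) (τ : ℂ) : ℂ :=
  qq τ * ∏' n : ℕ, ∏ i, ((1 - (lam i)⁻¹ * qq τ ^ (n + 1)) * (1 - lam i * qq τ ^ (n + 1)))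

/-- `η_{-g}(τ) = q·∏_{n≥1}∏_{i=1}^{12}(1+λᵢ⁻¹qⁿ)(1+λᵢqⁿ)`. -/
def etaG12neg (lam : Fin 12 → ℂ) (τ : ℂ) : ℂ :=
  qq τ * ∏' n : ℕ, ∏ i, ((1 + (lam i)⁻¹ * qq τ ^ (n + 1)) * (1 + lam i * qq τ ^ (n + 1)))

/-- `t_g(τ) = η_g(τ)/η_g(2τ)`. -/
def tg12 (lam : Fin 12 → ℂ) (τ : ℂ) : ℂ := etaG12 lam τ / etaG12 lam (2 * τ)

/-- `t_{-g}(τ) = η_{-g}(τ)/η_{-g}(2τ)`. -/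
def tg12neg (lam : Fin 12 → ℂ) (τ : ℂ) : ℂ := etaG12neg lam τ / etaG12neg lam (2 * τ)

/-! With `G(x) = ∏ᵢ (1 - λᵢ⁻¹x)(1 - λᵢx)` one has `η_g = q ∏ₙ G(qⁿ)` and `η_{-g} = q ∏ₙ G(-qⁿ)`.
Shifting `τ ↦ τ + 1/2` replaces `q` by `-q`, and splitting `∏ₙ G((-q)ⁿ)` into odd and even `n`
gives `A·B` with `A = ∏_{n odd} G(-qⁿ)` and `B = ∏_{n even} G(qⁿ)`, while `η_g(2τ + 1) = q²B`.
Likewise `η_{-g}(τ) = q·A·C` and `η_{-g}(2τ) = q²C` with `C = ∏_{n even} G(-qⁿ)`, so both sides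
equal `-A/q`. The products `B`, `C` are nonzero because `|λᵢ| = 1` and `|q| < 1`. -/

theorem Complex.exists_hasProd_one_add_ne_zero {ι : Type*} {f : ι → ℂ} (hf : Summable f)
    (hf₁ : ∀ i, 1 + f i ≠ 0) : ∃ a ≠ 0, HasProd (fun i ↦ 1 + f i) a :=
  ⟨_, exp_ne_zero _, hasProd_of_hasSum_log hf₁ (summable_log_one_add_of_summable hf).hasSum⟩

def etaFactor {ι : Type*} [Fintype ι] (lam : ι → ℂ) (x : ℂ) : ℂ :=
  ∏ i, (1 - (lam i)⁻¹ * x) * (1 - lam i * x)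

theorem exists_hasProd_etaFactor_ne_zero {ι κ : Type*} [Fintype ι] {lam : ι → ℂ}
    (hlam : ∀ i, ‖lam i‖ = 1) {u : κ → ℂ} (hu : Summable u) (hu₁ : ∀ n, ‖u n‖ < 1) :
    ∃ a ≠ 0, HasProd (fun n ↦ etaFactor lam (u n)) a := by
  have one_sub {c : ℂ} (hc : ‖c‖ = 1) : ∃ a ≠ 0, HasProd (fun n ↦ 1 - c * u n) a := by
    simp only [sub_eq_add_neg]
    refine exists_hasProd_one_add_ne_zero (hu.mul_left c).neg fun n h ↦ ?_
    have h₁ : ‖c * u n‖ = 1 := by rw [show c * u n = 1 by linear_combination -h, norm_one]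
    rw [norm_mul, hc, one_mul] at h₁
    exact (hu₁ n).ne h₁
  have factor (i : ι) : ∃ a ≠ 0,
      HasProd (fun n ↦ (1 - (lam i)⁻¹ * u n) * (1 - lam i * u n)) a := by
    obtain ⟨a, ha, hA⟩ := one_sub (c := (lam i)⁻¹) (by rw [norm_inv, hlam i, inv_one])
    obtain ⟨b, hb, hB⟩ := one_sub (hlam i)
    exact ⟨a * b, mul_ne_zero ha hb, hA.mul hB⟩
  choose a ha hA using factor
  exact ⟨∏ i, a i, Finset.prod_ne_zero_iff.2 fun i _ ↦ ha i,
    hasProd_prod fun i _ ↦ hA i⟩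

theorem exists_hasProd_etaFactor_geometric {ι : Type*} [Fintype ι] {lam : ι → ℂ}
    (hlam : ∀ i, ‖lam i‖ = 1) {a r : ℂ} (ha : ‖a‖ < 1) (hr : ‖r‖ < 1) :
    ∃ P ≠ 0, HasProd (fun n : ℕ ↦ etaFactor lam (a * r ^ n)) P := by
  refine exists_hasProd_etaFactor_ne_zero hlam
    ((summable_geometric_of_norm_lt_one hr).mul_left a) fun n ↦ ?_
  rw [norm_mul, norm_pow]
  exact (mul_le_of_le_one_right (norm_nonneg a) (pow_le_one₀ (norm_nonneg r) hr.le)).trans_lt ha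

theorem norm_qq_lt_one {τ : ℂ} (hτ : 0 < τ.im) : ‖qq τ‖ < 1 := by
  have : (twoPiI * τ).re = -(2 * Real.pi * τ.im) := by simp [twoPiI]
  rw [qq, norm_exp, this, Real.exp_lt_one_iff]
  nlinarith [Real.pi_pos]

theorem qq_add_half (τ : ℂ) : qq (τ + 1 / 2) = -qq τ := by
  rw [qq, qq, twoPiI, mul_add, exp_add,
    show 2 * (Real.pi : ℂ) * I * (1 / 2) = Real.pi * I by ring, exp_pi_mul_I, mul_neg_one]

theorem qq_two_mul (τ : ℂ) : qq (2 * τ) = qq τ ^ 2 := by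
  rw [qq, qq, ← exp_nat_mul]
  ring_nf

def etaProd (F : ℂ → ℂ) (q : ℂ) : ℂ := q * ∏' n : ℕ, F (q ^ (n + 1))

theorem hasProd_comp_pow_succ_of_odd_even {R M : Type*} [CommSemiring R] [CommMonoid M]
    [TopologicalSpace M] [ContinuousMul M] {F : R → M} {q : R} {A B : M}
    (hodd : HasProd (fun k ↦ F (q * (q ^ 2) ^ k)) A)
    (heven : HasProd (fun k ↦ F (q ^ 2 * (q ^ 2) ^ k)) B) :
    HasProd (fun n ↦ F (q ^ (n + 1))) (A * B) :=
  HasProd.even_mul_odd (f := fun n ↦ F (q ^ (n + 1)))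
    (by convert hodd using 3 with k; ring) (by convert heven using 3 with k; ring)

theorem etaProd_neg_div_etaProd_sq {F : ℂ → ℂ} {q A B C : ℂ} (hq : q ≠ 0) (hB₀ : B ≠ 0)
    (hC₀ : C ≠ 0) (hA : HasProd (fun k ↦ F (-q * (q ^ 2) ^ k)) A)
    (hB : HasProd (fun k ↦ F (q ^ 2 * (q ^ 2) ^ k)) B)
    (hC : HasProd (fun k ↦ F (-q ^ 2 * (q ^ 2) ^ k)) C) :
    etaProd F (-q) / etaProd F (q ^ 2) =
      -(etaProd (fun x ↦ F (-x)) q / etaProd (fun x ↦ F (-x)) (q ^ 2)) := by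
  have hAB : etaProd F (-q) = -q * (A * B) := by
    rw [etaProd, (hasProd_comp_pow_succ_of_odd_even (by simpa only [neg_sq] using hA)
      (by simpa only [neg_sq] using hB)).tprod_eq]
  have hAC : etaProd (fun x ↦ F (-x)) q = q * (A * C) := by
    rw [etaProd, (hasProd_comp_pow_succ_of_odd_even (F := fun x ↦ F (-x))
      (by simpa only [neg_mul] using hA)
      (by simpa only [neg_mul] using hC)).tprod_eq]
  have hB' : etaProd F (q ^ 2) = q ^ 2 * B := by
    rw [etaProd, ← hB.tprod_eq]
    congr! 3 with n
    rw [pow_succ']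
  have hC' : etaProd (fun x ↦ F (-x)) (q ^ 2) = q ^ 2 * C := by
    rw [etaProd, ← hC.tprod_eq]
    congr! 3 with n
    rw [pow_succ', neg_mul]
  rw [hAB, hAC, hB', hC']
  field_simp

theorem etaG12_eq (lam : Fin 12 → ℂ) (τ : ℂ) : etaG12 lam τ = etaProd (etaFactor lam) (qq τ) :=
  rfl

theorem etaG12neg_eq (lam : Fin 12 → ℂ) (τ : ℂ) :
    etaG12neg lam τ = etaProd (fun x ↦ etaFactor lam (-x)) (qq τ) := by
  simp only [etaG12neg, etaProd, etaFactor, mul_neg, sub_neg_eq_add]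

/-- `t_g(τ + 1/2) = −t_{-g}(τ)`. -/
theorem tg_shift_half (lam : Fin 12 → ℂ) (hlam : ∀ i, ‖lam i‖ = 1) :
    ∀ τ : ℂ, 0 < τ.im → tg12 lam (τ + 1 / 2) = -tg12neg lam τ := by
  intro τ hτ
  have hq : ‖qq τ‖ < 1 := norm_qq_lt_one hτ
  have hq₂ : ‖qq τ ^ 2‖ < 1 := by
    rw [norm_pow]; exact pow_lt_one₀ (norm_nonneg _) hq two_ne_zero
  obtain ⟨A, -, hA⟩ := exists_hasProd_etaFactor_geometric hlam (a := -qq τ)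
    (by rwa [norm_neg]) hq₂
  obtain ⟨B, hB₀, hB⟩ := exists_hasProd_etaFactor_geometric hlam hq₂ hq₂
  obtain ⟨C, hC₀, hC⟩ := exists_hasProd_etaFactor_geometric hlam (a := -qq τ ^ 2)
    (by rwa [norm_neg]) hq₂
  simp only [tg12, tg12neg, etaG12_eq, etaG12neg_eq, qq_two_mul, qq_add_half, neg_sq]
  exact etaProd_neg_div_etaProd_sq (exp_ne_zero _) hB₀ hC₀ hA hB hC
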